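/- arXiv:0910.2012 — 2 statements merged into one kernel-verified Lean document; each statement's English description precedes it below -/
import Mathlib

section
/- Let P : W → Hom(U,V) and Q : W → Hom(V,Z) be continuous matrix-valued functions on a connected topological space W such that im P(w) = ker Q(w) for every w ∈ W. Then rank P(w) and rank Q(w) are constant on W. -/
/-!
By rank–nullity and exactness, `rank P(w) + rank Q(w) = dim V` for every `w`. Both ranks are lower
semicontinuous, so near any point neither can drop; as their sum is fixed, neither can rise either.
Thus both are locally constant, hence constant on the connected space `W`.
-/

open Filter Topology

theorem lowerSemicontinuous_finrank_range {𝕜 E F : Type*} [NontriviallyNormedField 𝕜]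
    [CompleteSpace 𝕜] [NormedAddCommGroup E] [NormedSpace 𝕜 E] [NormedAddCommGroup F]
    [NormedSpace 𝕜 F] [FiniteDimensional 𝕜 F] :
    LowerSemicontinuous fun T : E →L[𝕜] F => Module.finrank 𝕜 (LinearMap.range (T : E →ₗ[𝕜] F)) := by
  refine lowerSemicontinuous_iff_isOpen_preimage.2 fun n => ?_
  convert isOpen_setOfPred_nat_le_rank (𝕜 := 𝕜) (E := E) (F := F) (n + 1) using 1
  ext T
  simp only [Set.mem_preimage, Set.mem_Ioi, Set.mem_ofPred_eq, LinearMap.rank,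
    ← Module.finrank_eq_rank, Nat.cast_le, Nat.succ_le_iff]

theorem LowerSemicontinuous.eventually_le_nat {X : Type*} [TopologicalSpace X] {f : X → ℕ}
    (hf : LowerSemicontinuous f) (x : X) : ∀ᶠ y in 𝓝 x, f x ≤ f y := by
  rcases Nat.eq_zero_or_eq_succ_pred (f x) with h | h
  · exact Eventually.of_forall fun y => h ▸ Nat.zero_le _
  · filter_upwards [hf x (f x).pred (by omega)] with y hy
    omega

theorem IsLocallyConstant.of_lowerSemicontinuous_of_add_eq {X : Type*} [TopologicalSpace X]
    {f g : X → ℕ} (hf : LowerSemicontinuous f) (hg : LowerSemicontinuous g) {c : ℕ}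
    (hfg : ∀ x, f x + g x = c) : IsLocallyConstant f := by
  refine (IsLocallyConstant.iff_eventually_eq f).2 fun x => ?_
  filter_upwards [hf.eventually_le_nat x, hg.eventually_le_nat x] with y hfy hgy
  have := hfg x
  have := hfg y
  omega

theorem finrank_range_add_finrank_range_of_range_eq_ker {K U V Z : Type*} [DivisionRing K]
    [AddCommGroup U] [Module K U] [AddCommGroup V] [Module K V] [FiniteDimensional K V]
    [AddCommGroup Z] [Module K Z] {f : U →ₗ[K] V} {g : V →ₗ[K] Z}
    (hfg : LinearMap.range f = LinearMap.ker g) :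
    Module.finrank K (LinearMap.range f) + Module.finrank K (LinearMap.range g) =
      Module.finrank K V := by
  rw [hfg, add_comm, LinearMap.finrank_range_add_finrank_ker]

theorem exact_complex_constant_rank_general {W U V Z : Type*} [TopologicalSpace W] [ConnectedSpace W]
    [NormedAddCommGroup U] [NormedSpace ℝ U]
    [NormedAddCommGroup V] [NormedSpace ℝ V] [FiniteDimensional ℝ V]
    [NormedAddCommGroup Z] [NormedSpace ℝ Z] [FiniteDimensional ℝ Z]
    (P : W → (U →L[ℝ] V)) (Q : W → (V →L[ℝ] Z))
    (hP : Continuous P) (hQ : Continuous Q)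
    (hexact : ∀ w, LinearMap.range (P w : U →ₗ[ℝ] V) = LinearMap.ker (Q w : V →ₗ[ℝ] Z)) :
    (∀ w w', Module.finrank ℝ (LinearMap.range (P w : U →ₗ[ℝ] V)) =
        Module.finrank ℝ (LinearMap.range (P w' : U →ₗ[ℝ] V))) ∧
    (∀ w w', Module.finrank ℝ (LinearMap.range (Q w : V →ₗ[ℝ] Z)) =
        Module.finrank ℝ (LinearMap.range (Q w' : V →ₗ[ℝ] Z))) := by
  have hsum := fun w => finrank_range_add_finrank_range_of_range_eq_ker (hexact w)
  have hPlsc := lowerSemicontinuous_finrank_range.comp hP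
  have hQlsc := lowerSemicontinuous_finrank_range.comp hQ
  have hPconst := IsLocallyConstant.of_lowerSemicontinuous_of_add_eq hPlsc hQlsc hsum
  have hQconst := IsLocallyConstant.of_lowerSemicontinuous_of_add_eq hQlsc hPlsc
    fun w => (add_comm _ _).trans (hsum w)
  exact ⟨hPconst.apply_eq_of_preconnectedSpace, hQconst.apply_eq_of_preconnectedSpace⟩

theorem exact_complex_constant_rank {W U V Z : Type*} [TopologicalSpace W] [ConnectedSpace W]
    [NormedAddCommGroup U] [NormedSpace ℝ U] [FiniteDimensional ℝ U]
    [NormedAddCommGroup V] [NormedSpace ℝ V] [FiniteDimensional ℝ V]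
    [NormedAddCommGroup Z] [NormedSpace ℝ Z] [FiniteDimensional ℝ Z]
    (P : W → (U →L[ℝ] V)) (Q : W → (V →L[ℝ] Z))
    (hP : Continuous P) (hQ : Continuous Q)
    (hexact : ∀ w, LinearMap.range (P w : U →ₗ[ℝ] V) = LinearMap.ker (Q w : V →ₗ[ℝ] Z)) :
    (∀ w w', Module.finrank ℝ (LinearMap.range (P w : U →ₗ[ℝ] V)) =
        Module.finrank ℝ (LinearMap.range (P w' : U →ₗ[ℝ] V))) ∧
    (∀ w w', Module.finrank ℝ (LinearMap.range (Q w : V →ₗ[ℝ] Z)) =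
        Module.finrank ℝ (LinearMap.range (Q w' : V →ₗ[ℝ] Z))) :=
  exact_complex_constant_rank_general P Q hP hQ hexact
end

section
/- Let P(ξ) : ℝ² → ℝ³ be given by P(ξ)(u₁,u₂) = (ξ₁u₁, ξ₂u₁ + ξ₁u₂, ξ₂u₂). If B₁, B₂ : ℝ³ → ℝ² are linear maps such that (ξ₁B₁ + ξ₂B₂) ∘ P(ξ) = 0 for all ξ ∈ ℝ², then B₁ = B₂ = 0. -/
theorem no_elliptic_completion
    (B₁ B₂ : (Fin 3 → ℝ) →ₗ[ℝ] (Fin 2 → ℝ))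
    (h : ∀ ξ : Fin 2 → ℝ,
      (ξ 0 • B₁ + ξ 1 • B₂) ∘ₗ
        (!![ξ 0, 0; ξ 1, ξ 0; 0, ξ 1] : Matrix (Fin 3) (Fin 2) ℝ).mulVecLin = 0) :
    B₁ = 0 ∧ B₂ = 0 := by
  have H : ∀ ξ u : Fin 2 → ℝ,
      ξ 0 • B₁ ((!![ξ 0, 0; ξ 1, ξ 0; 0, ξ 1] : Matrix (Fin 3) (Fin 2) ℝ).mulVec u)
        + ξ 1 • B₂ ((!![ξ 0, 0; ξ 1, ξ 0; 0, ξ 1] : Matrix (Fin 3) (Fin 2) ℝ).mulVec u)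
        = 0 := by
    intro ξ u
    have := LinearMap.congr_fun (h ξ) u
    simpa [Matrix.mulVecLin_apply] using this
  have h10 := H ![1,0] ![1,0]
  have h11 := H ![1,0] ![0,1]
  have h20 := H ![0,1] ![1,0]
  have h21 := H ![0,1] ![0,1]
  have h30 := H ![1,1] ![1,0]
  have h31 := H ![1,1] ![0,1]
  simp only [Matrix.cons_val_zero, Matrix.cons_val_one, Matrix.head_cons] at h10 h11 h20 h21 h30 h31
  have m1 : (!![(1:ℝ), 0; 0, 1; 0, 0] : Matrix (Fin 3) (Fin 2) ℝ).mulVec ![1,0] = ![1,0,0] := by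
    funext i; fin_cases i <;> simp [Matrix.mulVec, dotProduct, Fin.sum_univ_two]
  have m2 : (!![(1:ℝ), 0; 0, 1; 0, 0] : Matrix (Fin 3) (Fin 2) ℝ).mulVec ![0,1] = ![0,1,0] := by
    funext i; fin_cases i <;> simp [Matrix.mulVec, dotProduct, Fin.sum_univ_two]
  have m3 : (!![(0:ℝ), 0; 1, 0; 0, 1] : Matrix (Fin 3) (Fin 2) ℝ).mulVec ![1,0] = ![0,1,0] := by
    funext i; fin_cases i <;> simp [Matrix.mulVec, dotProduct, Fin.sum_univ_two]
  have m4 : (!![(0:ℝ), 0; 1, 0; 0, 1] : Matrix (Fin 3) (Fin 2) ℝ).mulVec ![0,1] = ![0,0,1] := by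
    funext i; fin_cases i <;> simp [Matrix.mulVec, dotProduct, Fin.sum_univ_two]
  have m5 : (!![(1:ℝ), 0; 1, 1; 0, 1] : Matrix (Fin 3) (Fin 2) ℝ).mulVec ![1,0] = ![1,1,0] := by
    funext i; fin_cases i <;> simp [Matrix.mulVec, dotProduct, Fin.sum_univ_two]
  have m6 : (!![(1:ℝ), 0; 1, 1; 0, 1] : Matrix (Fin 3) (Fin 2) ℝ).mulVec ![0,1] = ![0,1,1] := by
    funext i; fin_cases i <;> simp [Matrix.mulVec, dotProduct, Fin.sum_univ_two]
  rw [m1] at h10; rw [m2] at h11; rw [m3] at h20; rw [m4] at h21; rw [m5] at h30; rw [m6] at h31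
  simp only [one_smul, zero_smul, add_zero, zero_add] at h10 h11 h20 h21 h30 h31
  -- h10 : B₁ ![1,0,0] = 0, h11 : B₁ ![0,1,0] = 0, h20 : B₂ ![0,1,0] = 0, h21 : B₂ ![0,0,1] = 0
  have s1 : (![0,1,1] : Fin 3 → ℝ) = ![0,1,0] + ![0,0,1] := by
    funext i; fin_cases i <;> norm_num
  have s2 : (![1,1,0] : Fin 3 → ℝ) = ![1,0,0] + ![0,1,0] := by
    funext i; fin_cases i <;> norm_num
  rw [s1] at h31; rw [s2] at h30
  simp only [map_add, h10, h11, h20, h21, zero_add, add_zero] at h31 h30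
  have decomp : ∀ v : Fin 3 → ℝ, v = v 0 • ![(1:ℝ),0,0] + v 1 • ![0,1,0] + v 2 • ![0,0,1] := by
    intro v; funext i; fin_cases i <;> simp
  refine ⟨LinearMap.ext fun v => ?_, LinearMap.ext fun v => ?_⟩
  · rw [decomp v, map_add, map_add, map_smul, map_smul, map_smul, h10, h11, h31]; simp
  · rw [decomp v, map_add, map_add, map_smul, map_smul, map_smul, h30, h20, h21]; simp
end
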